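/- The prefix coding of prediction suffix tree models is complete: for every depth bound D, ∑_{M ∈ C_D} 2^{−Γ_D(M)} = 1, where C_D is the set of all binary tree models of depth at most D and Γ_D(M) equals the number of nodes of M minus the number of leaves of M at depth exactly D. -/

import Mathlib

/-- A model of a prediction suffix tree: a finite binary tree in which every
internal node has exactly two children. -/
inductive BinTree where
  | leaf : BinTree
  | node : BinTree → BinTree → BinTree
deriving DecidableEq

namespace BinTree

/-- Depth of a tree (a single leaf has depth 0). -/
def depth : BinTree → ℕ
  | leaf => 0
  | node l r => max l.depth r.depth + 1

/-- Total number of nodes (internal nodes and leaves). -/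
def numNodes : BinTree → ℕ
  | leaf => 1
  | node l r => l.numNodes + r.numNodes + 1

/-- Number of leaves at depth exactly `d`. -/
def leavesAt : ℕ → BinTree → ℕ
  | 0, leaf => 1
  | 0, node _ _ => 0
  | _ + 1, leaf => 0
  | d + 1, node l r => leavesAt d l + leavesAt d r

/-- The prefix-code cost `Γ_D(M)`: number of nodes of `M` minus the number of
leaves of `M` at depth exactly `D`. -/
def cost (D : ℕ) (M : BinTree) : ℕ := M.numNodes - leavesAt D M

end BinTree

/-!
Splitting at the root, a tree of depth at most `D + 1` is either a leaf, of cost `1`, or a node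
whose two subtrees have depth at most `D`, of cost `1 + Γ_D(l) + Γ_D(r)`. Hence the Kraft sums
`S_D = ∑_{M ∈ C_D} 2^{-Γ_D(M)}` satisfy `S_0 = 1` and `S_{D+1} = 1/2 + S_D^2 / 2`, so `S_D = 1`
for all `D`.
-/

namespace BinTree

theorem leavesAt_le_numNodes (d : ℕ) (M : BinTree) : leavesAt d M ≤ M.numNodes := by
  induction M generalizing d with
  | leaf => cases d <;> simp [leavesAt, numNodes]
  | node l r ihl ihr =>
    cases d with
    | zero => simp [leavesAt]
    | succ d =>
      have := ihl d
      have := ihr d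
      simp only [leavesAt, numNodes]
      omega

@[simp] theorem cost_zero_leaf : cost 0 leaf = 0 := rfl

@[simp] theorem cost_succ_leaf (D : ℕ) : cost (D + 1) leaf = 1 := rfl

theorem cost_succ_node (D : ℕ) (l r : BinTree) :
    cost (D + 1) (node l r) = cost D l + cost D r + 1 := by
  have := leavesAt_le_numNodes D l
  have := leavesAt_le_numNodes D r
  simp only [cost, numNodes, leavesAt]
  omega

theorem two_zpow_neg_cost_succ_node (D : ℕ) (l r : BinTree) :
    (2 : ℝ) ^ (-(cost (D + 1) (node l r) : ℤ)) =
      2⁻¹ * ((2 : ℝ) ^ (-(cost D l : ℤ)) * (2 : ℝ) ^ (-(cost D r : ℤ))) := by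
  rw [cost_succ_node]
  push_cast
  rw [neg_add, neg_add, zpow_add₀ two_ne_zero, zpow_add₀ two_ne_zero, zpow_neg_one]
  ring

abbrev BoundedDepth (D : ℕ) := {M : BinTree // M.depth ≤ D}

theorem eq_leaf_of_depth_eq_zero {M : BinTree} (h : M.depth = 0) : M = leaf := by
  cases M with
  | leaf => rfl
  | node l r => simp [depth] at h

instance : Unique (BoundedDepth 0) where
  default := ⟨leaf, le_rfl⟩
  uniq M := Subtype.ext (eq_leaf_of_depth_eq_zero (Nat.le_zero.mp M.2))

def boundedDepthSuccEquiv (D : ℕ) :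
    BoundedDepth (D + 1) ≃ Option (BoundedDepth D × BoundedDepth D) where
  toFun
    | ⟨leaf, _⟩ => none
    | ⟨node l r, h⟩ =>
      have h : max l.depth r.depth ≤ D := Nat.le_of_succ_le_succ h
      some (⟨l, (le_max_left _ _).trans h⟩, ⟨r, (le_max_right _ _).trans h⟩)
  invFun
    | none => ⟨leaf, Nat.zero_le _⟩
    | some (l, r) => ⟨node l r, Nat.succ_le_succ (max_le l.2 r.2)⟩
  left_inv := by rintro ⟨_ | _, _⟩ <;> rfl
  right_inv := by rintro (_ | ⟨⟨_, _⟩, ⟨_, _⟩⟩) <;> rfl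

instance instFintypeBoundedDepth : (D : ℕ) → Fintype (BoundedDepth D)
  | 0 => inferInstance
  | D + 1 =>
    letI := instFintypeBoundedDepth D
    Fintype.ofEquiv _ (boundedDepthSuccEquiv D).symm

theorem sum_two_zpow_neg_cost (D : ℕ) :
    ∑ M : BoundedDepth D, (2 : ℝ) ^ (-(cost D M.1 : ℤ)) = 1 := by
  induction D with
  | zero => simp [show (default : BoundedDepth 0).1 = leaf from rfl]
  | succ D ih =>
    rw [← (boundedDepthSuccEquiv D).symm.sum_comp, Fintype.sum_option, Fintype.sum_prod_type]
    simp_rw [boundedDepthSuccEquiv, Equiv.coe_fn_symm_mk, cost_succ_leaf,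
      two_zpow_neg_cost_succ_node, ← Finset.mul_sum, ← Finset.sum_mul, ih]
    norm_num

end BinTree

/-- the prefix code on tree models is complete: for every depth
bound `D`, `∑_{M ∈ C_D} 2^{−Γ_D(M)} = 1`, where `C_D` is the set of all binary
tree models of depth at most `D`. -/
theorem prefix_code_complete (D : ℕ) :
    HasSum (fun M : {M : BinTree // M.depth ≤ D} =>
      (2 : ℝ) ^ (-(BinTree.cost D M.1 : ℤ))) 1 :=
  BinTree.sum_two_zpow_neg_cost D ▸ hasSum_fintype _
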